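/- Let K be a compact Hausdorff space, f ∈ C(K), and let S = ⋃_{i∈ℕ} 𝓘(i) be a covering of K by regular isolated families, with the associated recursive families, sets G(j,𝓜), sets B(L,m,n,i,j) and notion of good choice. Let L_1 ⊇ L_2 ⊇ ⋯ be a decreasing sequence of nonempty closed subsets of K with intersection L. If (𝓜,𝓝) is a good choice of type (m,n,i,j) on L, then (𝓜,𝓝) is a good choice of the same type on L_s for arbitrarily large values of s. -/

import Mathlib

open Set TopologicalSpace

/-- A family of subsets is isolated if each member is disjoint from the closure of the
union of the other members. -/
def IsIsolatedFamily {K : Type*} [TopologicalSpace K] (ℐ : Set (Set K)) : Prop :=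
  ∀ N ∈ ℐ, N ∩ closure (⋃₀ (ℐ \ {N})) = ∅

/-- A regular isolated family: `N = closure N \ closure (⋃ (ℐ \ {N}))` for each member. -/
def IsRegularIsolatedFamily {K : Type*} [TopologicalSpace K] (ℐ : Set (Set K)) : Prop :=
  IsIsolatedFamily ℐ ∧ ∀ N ∈ ℐ, N = closure N \ closure (⋃₀ (ℐ \ {N}))

/-- `Jof F = closure (⋃ F) \ ⋃ F` for a family of sets `F`. -/
def Jof {K : Type*} [TopologicalSpace K] (F : Set (Set K)) : Set K :=
  closure (⋃₀ F) \ ⋃₀ F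

/-- Auxiliary recursion defining the families `𝓘(i_0,…,i_k)`, with the sequence of
indices given in *reverse* order (most recent index first):
`𝓘(i_0,…,i_k,i_{k+1}) = {N ∩ J(i_0,…,i_k) : N ∈ 𝓘(i_{k+1})}`. -/
def famRev {K : Type*} [TopologicalSpace K] (𝓘 : ℕ → Set (Set K)) : List ℕ → Set (Set K)
  | [] => ∅
  | [i] => 𝓘 i
  | i :: j :: l => (fun N => N ∩ Jof (famRev 𝓘 (j :: l))) '' 𝓘 i

/-- The family `𝓘(i_0,…,i_k)`, the index sequence given in natural order. -/
def fam {K : Type*} [TopologicalSpace K] (𝓘 : ℕ → Set (Set K)) (l : List ℕ) :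
    Set (Set K) :=
  famRev 𝓘 l.reverse

/-- The set `I(i_0,…,i_k) = ⋃ 𝓘(i_0,…,i_k)`. -/
def ISet {K : Type*} [TopologicalSpace K] (𝓘 : ℕ → Set (Set K)) (l : List ℕ) : Set K :=
  ⋃₀ fam 𝓘 l

/-- The set `J(i_0,…,i_k) = closure I(i_0,…,i_k) \ I(i_0,…,i_k)`. -/
def JSet {K : Type*} [TopologicalSpace K] (𝓘 : ℕ → Set (Set K)) (l : List ℕ) : Set K :=
  closure (ISet 𝓘 l) \ ISet 𝓘 l

/-- Membership in `Σ`: nonempty strictly increasing finite sequences of naturals. -/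
def SigmaMem (l : List ℕ) : Prop :=
  l ≠ [] ∧ l.Chain' (· < ·)

/-- The total order `≺` on finite sequences: `a ≺ b` iff either they first differ at a
position `r` where `a` is smaller, or `b` is a proper initial segment of `a`. -/
def SLt (a b : List ℕ) : Prop :=
  (∃ (r : ℕ) (x y : ℕ), (∀ s < r, a[s]? = b[s]?) ∧ a[r]? = some x ∧ b[r]? = some y ∧ x < y)
  ∨ (b <+: a ∧ b ≠ a)

/-- The open set `G(j,𝓜) = K \ (⋃_{i ≺ j} closure I(i) ∪ closure ⋃(𝓘(j) \ 𝓜))`. -/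
def Gset {K : Type*} [TopologicalSpace K] (𝓘 : ℕ → Set (Set K)) (jl : List ℕ)
    (𝓜 : Set (Set K)) : Set K :=
  (⋃₀ {S | ∃ a : List ℕ, SigmaMem a ∧ SLt a jl ∧ S = closure (ISet 𝓘 a)} ∪
    closure (⋃₀ (fam 𝓘 jl \ 𝓜)))ᶜ

/-- The pair `(𝓜,𝓝)` belongs to `B(L,m,n,i,j)`: finite subsets of `𝓘(i)`, `𝓘(j)` of
cardinalities `m`, `n`, all of whose members meet `L`, with disjoint closures of the
unions. -/
def InB {K : Type*} [TopologicalSpace K] (𝓘 : ℕ → Set (Set K)) (L : Set K)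
    (m n : ℕ) (il jl : List ℕ) (𝓜 𝓝 : Set (Set K)) : Prop :=
  𝓜 ⊆ fam 𝓘 il ∧ 𝓝 ⊆ fam 𝓘 jl ∧ 𝓜.Finite ∧ 𝓝.Finite ∧
    𝓜.ncard = m ∧ 𝓝.ncard = n ∧
    (∀ M ∈ 𝓜, (M ∩ L).Nonempty) ∧ (∀ N ∈ 𝓝, (N ∩ L).Nonempty) ∧
    closure (⋃₀ 𝓜) ∩ closure (⋃₀ 𝓝) = ∅

/-- The quantity `(B − b) + (a − A)`, where `A = min f[L]`, `B = max f[L]`,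
`a = max_{M ∈ 𝓜} inf f[L ∩ closure M]` and `b = min_{N ∈ 𝓝} sup f[L ∩ closure N]`. -/
noncomputable def gcBound {K : Type*} [TopologicalSpace K] (f : K → ℝ) (L : Set K)
    (𝓜 𝓝 : Set (Set K)) : ℝ :=
  (sSup (f '' L) - sInf {x | ∃ N ∈ 𝓝, x = sSup (f '' (L ∩ closure N))})
    + (sSup {x | ∃ M ∈ 𝓜, x = sInf (f '' (L ∩ closure M))} - sInf (f '' L))

/-- `α = inf f[L \ G(i,𝓜)]`, computed in `EReal` so that `inf ∅ = +∞`. -/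
noncomputable def gcAlpha {K : Type*} [TopologicalSpace K] (𝓘 : ℕ → Set (Set K))
    (f : K → ℝ) (L : Set K) (il : List ℕ) (𝓜 : Set (Set K)) : EReal :=
  sInf ((fun t => (f t : EReal)) '' (L \ Gset 𝓘 il 𝓜))

/-- `β = sup f[L \ G(j,𝓝)]`, computed in `EReal` so that `sup ∅ = −∞`. -/
noncomputable def gcBeta {K : Type*} [TopologicalSpace K] (𝓘 : ℕ → Set (Set K))
    (f : K → ℝ) (L : Set K) (jl : List ℕ) (𝓝 : Set (Set K)) : EReal :=
  sSup ((fun t => (f t : EReal)) '' (L \ Gset 𝓘 jl 𝓝))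

/-- `(𝓜,𝓝)` is a good choice of type `(m,n,i,j)` on `L`:
`n⁻¹(B − β) > (B − b) + (a − A)` and `m⁻¹(α − A) > (B − b) + (a − A)`. -/
def GoodChoice {K : Type*} [TopologicalSpace K] (𝓘 : ℕ → Set (Set K)) (f : K → ℝ)
    (L : Set K) (m n : ℕ) (il jl : List ℕ) (𝓜 𝓝 : Set (Set K)) : Prop :=
  ((gcBound f L 𝓜 𝓝 : ℝ) : EReal)
      < ((n : ℝ) : EReal)⁻¹ * (((sSup (f '' L) : ℝ) : EReal) - gcBeta 𝓘 f L jl 𝓝) ∧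
  ((gcBound f L 𝓜 𝓝 : ℝ) : EReal)
      < ((m : ℝ) : EReal)⁻¹ * (gcAlpha 𝓘 f L il 𝓜 - ((sInf (f '' L) : ℝ) : EReal))

section Struct
variable {K : Type*} [TopologicalSpace K]

lemma sUnion_image_inter (ℐ : Set (Set K)) (C : Set K) :
    ⋃₀ ((fun N => N ∩ C) '' ℐ) = ⋃₀ ℐ ∩ C := by
  ext x
  simp only [Set.sUnion_image, Set.mem_iUnion, Set.mem_inter_iff, Set.mem_sUnion]
  tauto

lemma isClosed_JofS {ℐ : Set (Set K)} (hreg : IsRegularIsolatedFamily ℐ)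
    {C : Set K} (hC : IsClosed C) :
    IsClosed (closure (⋃₀ ℐ ∩ C) \ (⋃₀ ℐ ∩ C)) := by
  set S := ⋃₀ ℐ ∩ C with hS
  have hkey : ∀ x ∈ S, x ∉ closure (closure S \ S) := by
    rintro x ⟨⟨N, hN, hxN⟩, hxC⟩ hx
    have hiso := hreg.1 N hN
    have hxO : x ∈ (closure (⋃₀ (ℐ \ {N})))ᶜ := fun h =>
      (Set.eq_empty_iff_forall_notMem.1 hiso x) ⟨hxN, h⟩
    have hO : IsOpen (closure (⋃₀ (ℐ \ {N})))ᶜ := isClosed_closure.isOpen_compl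
    rcases mem_closure_iff.1 hx _ hO hxO with ⟨y, hyO, hyS⟩
    have hsub : S ⊆ (N ∩ C) ∪ (⋃₀ (ℐ \ {N})) := by
      rintro z ⟨⟨N', hN', hz⟩, hzC⟩
      by_cases h : N' = N
      · exact Or.inl ⟨h ▸ hz, hzC⟩
      · exact Or.inr ⟨N', ⟨hN', h⟩, hz⟩
    have hycl : y ∈ closure (N ∩ C) ∪ closure (⋃₀ (ℐ \ {N})) := by
      have := closure_mono hsub hyS.1
      rwa [closure_union] at this
    have hyNC : y ∈ closure (N ∩ C) := hycl.resolve_right hyO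
    have hyN : y ∈ N := by
      have h2 := hreg.2 N hN
      rw [h2]
      exact ⟨closure_mono Set.inter_subset_left hyNC, hyO⟩
    have hyC : y ∈ C := (hC.closure_subset_iff.2 Set.inter_subset_right) hyNC
    exact hyS.2 ⟨⟨N, hN, hyN⟩, hyC⟩
  apply isClosed_of_closure_subset
  intro x hx
  have hx1 : x ∈ closure S := by
    have := closure_mono (Set.diff_subset : closure S \ S ⊆ closure S) hx
    rwa [closure_closure] at this
  exact ⟨hx1, fun hxS => hkey x hxS hx⟩

variable (𝓘 : ℕ → Set (Set K))

lemma famRev_cons_sUnion (i : ℕ) {t : List ℕ} (ht : t ≠ []) :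
    ⋃₀ famRev 𝓘 (i :: t) = ⋃₀ 𝓘 i ∩ Jof (famRev 𝓘 t) := by
  cases t with
  | nil => exact absurd rfl ht
  | cons j l => exact sUnion_image_inter _ _

lemma isClosed_Jof_famRev (hreg : ∀ i, IsRegularIsolatedFamily (𝓘 i)) :
    ∀ t : List ℕ, t ≠ [] → IsClosed (Jof (famRev 𝓘 t)) := by
  intro t
  induction t with
  | nil => intro h; exact absurd rfl h
  | cons i t ih =>
    intro _
    cases t with
    | nil =>
      have h1 : ⋃₀ famRev 𝓘 [i] = ⋃₀ 𝓘 i ∩ univ := by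
        simp [famRev]
      rw [Jof, h1]
      exact isClosed_JofS (hreg i) isClosed_univ
    | cons j l =>
      have h1 : ⋃₀ famRev 𝓘 (i :: j :: l) = ⋃₀ 𝓘 i ∩ Jof (famRev 𝓘 (j :: l)) :=
        famRev_cons_sUnion 𝓘 i (by simp)
      rw [Jof, h1]
      exact isClosed_JofS (hreg i) (ih (by simp))

lemma IRev_append_subset_Jof (hreg : ∀ i, IsRegularIsolatedFamily (𝓘 i)) :
    ∀ (c t : List ℕ), c ≠ [] → t ≠ [] → ⋃₀ famRev 𝓘 (c ++ t) ⊆ Jof (famRev 𝓘 t) := by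
  intro c
  induction c with
  | nil => intro t h; exact absurd rfl h
  | cons i c ih =>
    intro t _ ht
    cases c with
    | nil =>
      rw [List.cons_append, List.nil_append, famRev_cons_sUnion 𝓘 i ht]
      exact Set.inter_subset_right
    | cons i' c' =>
      rw [List.cons_append, famRev_cons_sUnion 𝓘 i (by simp)]
      refine Set.inter_subset_right.trans ?_
      have hsub : ⋃₀ famRev 𝓘 ((i' :: c') ++ t) ⊆ Jof (famRev 𝓘 t) := ih t (by simp) ht
      refine (Set.diff_subset : Jof (famRev 𝓘 ((i'::c') ++ t)) ⊆ _).trans ?_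
      exact (isClosed_Jof_famRev 𝓘 hreg t ht).closure_subset_iff.2 hsub

lemma closure_IRev_append_subset_Jof (hreg : ∀ i, IsRegularIsolatedFamily (𝓘 i))
    {c t : List ℕ} (hc : c ≠ []) (ht : t ≠ []) :
    closure (⋃₀ famRev 𝓘 (c ++ t)) ⊆ Jof (famRev 𝓘 t) :=
  (isClosed_Jof_famRev 𝓘 hreg t ht).closure_subset_iff.2 (IRev_append_subset_Jof 𝓘 hreg c t hc ht)

lemma closure_IRev_append_subset (hreg : ∀ i, IsRegularIsolatedFamily (𝓘 i))
    (c : List ℕ) {t : List ℕ} (ht : t ≠ []) :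
    closure (⋃₀ famRev 𝓘 (c ++ t)) ⊆ closure (⋃₀ famRev 𝓘 t) := by
  cases c with
  | nil => rw [List.nil_append]
  | cons i c =>
    exact (closure_IRev_append_subset_Jof 𝓘 hreg (by simp) ht).trans Set.diff_subset

end Struct

-- helpers
lemma list_le_foldr_max (l : List ℕ) : ∀ x ∈ l, x ≤ l.foldr max 0 := by
  induction l with
  | nil => simp
  | cons a l ih =>
    intro x hx
    rcases List.mem_cons.1 hx with rfl | hx
    · simp [List.foldr_cons, le_max_iff]
    · simp only [List.foldr_cons, le_max_iff]
      exact Or.inr (ih x hx)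

lemma takeWhile_stop (p : ℕ → Bool) :
    ∀ (l : List ℕ) (b : ℕ), l[(l.takeWhile p).length]? = some b → p b = false := by
  intro l
  induction l with
  | nil => intro b h; simp at h
  | cons a l ih =>
    intro b h
    by_cases hp : p a
    · have htw : (a :: l).takeWhile p = a :: l.takeWhile p := by
        simp [List.takeWhile_cons, hp]
      rw [htw] at h
      simp only [List.length_cons, List.getElem?_cons_succ] at h
      exact ih b h
    · have htw : (a :: l).takeWhile p = [] := by
        simp [List.takeWhile_cons, hp]
      rw [htw] at h
      simp only [List.length_nil, List.getElem?_cons_zero] at h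
      cases h
      simpa using hp

section Main
variable {K : Type*} [TopologicalSpace K] (𝓘 : ℕ → Set (Set K))

lemma isClosed_JSet (hreg : ∀ i, IsRegularIsolatedFamily (𝓘 i)) {l : List ℕ} (hl : l ≠ []) :
    IsClosed (JSet 𝓘 l) :=
  isClosed_Jof_famRev 𝓘 hreg l.reverse (by simpa using hl)

lemma closure_ISet_append_subset_JSet (hreg : ∀ i, IsRegularIsolatedFamily (𝓘 i))
    {p c : List ℕ} (hp : p ≠ []) (hc : c ≠ []) :
    closure (ISet 𝓘 (p ++ c)) ⊆ JSet 𝓘 p := by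
  show closure (⋃₀ famRev 𝓘 (p ++ c).reverse) ⊆ Jof (famRev 𝓘 p.reverse)
  rw [List.reverse_append]
  exact closure_IRev_append_subset_Jof 𝓘 hreg (by simpa using hc) (by simpa using hp)

lemma closure_ISet_append_subset (hreg : ∀ i, IsRegularIsolatedFamily (𝓘 i))
    {p : List ℕ} (c : List ℕ) (hp : p ≠ []) :
    closure (ISet 𝓘 (p ++ c)) ⊆ closure (ISet 𝓘 p) := by
  show closure (⋃₀ famRev 𝓘 (p ++ c).reverse) ⊆ closure (⋃₀ famRev 𝓘 p.reverse)
  rw [List.reverse_append]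
  exact closure_IRev_append_subset 𝓘 hreg _ (by simpa using hp)

lemma JSet_subset_JSet_take (hreg : ∀ i, IsRegularIsolatedFamily (𝓘 i))
    {l : List ℕ} (hl : l ≠ []) {r : ℕ} (hr1 : 1 ≤ r) (hr2 : r ≤ l.length) :
    JSet 𝓘 l ⊆ JSet 𝓘 (l.take r) := by
  by_cases hdrop : l.drop r = []
  · have : l.take r = l := by
      have hle : l.length ≤ r := List.drop_eq_nil_iff.1 hdrop
      exact List.take_of_length_le hle
    rw [this]
  · have htk : l.take r ≠ [] := by
      simp only [ne_eq, List.take_eq_nil_iff]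
      push_neg
      exact ⟨by omega, hl⟩
    have hlt : l = l.take r ++ l.drop r := (List.take_append_drop r l).symm
    refine (Set.diff_subset : JSet 𝓘 l ⊆ closure (ISet 𝓘 l)).trans ?_
    nth_rewrite 1 [hlt]
    exact closure_ISet_append_subset_JSet 𝓘 hreg htk hdrop

lemma mem_ISet_concat {x : K} {i0 : ℕ} (hx1 : x ∈ ⋃₀ 𝓘 i0) (t : List ℕ)
    (hx2 : t = [] ∨ x ∈ JSet 𝓘 t) : x ∈ ISet 𝓘 (t ++ [i0]) := by
  rcases eq_or_ne t [] with rfl | htne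
  · have h : ISet 𝓘 ([] ++ [i0]) = ⋃₀ 𝓘 i0 := by simp [ISet, fam, famRev]
    rw [h]
    exact hx1
  · have hx2' : x ∈ JSet 𝓘 t := by
      rcases hx2 with h | h
      · exact absurd h htne
      · exact h
    have h : ISet 𝓘 (t ++ [i0]) = ⋃₀ 𝓘 i0 ∩ JSet 𝓘 t := by
      show ⋃₀ famRev 𝓘 (t ++ [i0]).reverse = _
      rw [List.reverse_append, List.reverse_singleton, List.singleton_append,
        famRev_cons_sUnion 𝓘 i0 (by simpa using htne)]
      rfl
    rw [h]
    exact ⟨hx1, hx2'⟩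

end Main

lemma isClosed_predUnion {K : Type*} [TopologicalSpace K] (𝓘 : ℕ → Set (Set K))
    (hreg : ∀ i, IsRegularIsolatedFamily (𝓘 i))
    (hcover : ⋃₀ (⋃ i : ℕ, 𝓘 i) = Set.univ) (jl : List ℕ) :
    IsClosed (⋃₀ {S | ∃ a : List ℕ, SigmaMem a ∧ SLt a jl ∧ S = closure (ISet 𝓘 a)}) := by
  set U := ⋃₀ {S | ∃ a : List ℕ, SigmaMem a ∧ SLt a jl ∧ S = closure (ISet 𝓘 a)} with hU
  have hcov : ∀ x : K, ∃ i0, x ∈ ⋃₀ 𝓘 i0 := by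
    intro x
    have hx : x ∈ ⋃₀ (⋃ i : ℕ, 𝓘 i) := by rw [hcover]; exact Set.mem_univ x
    rcases hx with ⟨T, hT, hxT⟩
    rcases Set.mem_iUnion.1 hT with ⟨i0, hTi⟩
    exact ⟨i0, T, hTi, hxT⟩
  rcases eq_or_ne jl [] with rfl | hjl
  · have huniv : U = univ := by
      apply Set.eq_univ_of_forall
      intro x
      rcases hcov x with ⟨i0, hx⟩
      refine ⟨closure (ISet 𝓘 [i0]),
        ⟨[i0], ⟨by simp, List.isChain_singleton _⟩, Or.inr ⟨List.nil_prefix, by simp⟩, rfl⟩, ?_⟩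
      apply subset_closure
      have h : ISet 𝓘 [i0] = ⋃₀ 𝓘 i0 := by simp [ISet, fam, famRev]
      rw [h]; exact hx
    rw [huniv]; exact isClosed_univ
  classical
  set P : Set (List ℕ) := {p | ∃ (r i : ℕ) (hr : r < jl.length), i < jl[r] ∧
      p = jl.take r ++ [i] ∧ p.Chain' (· < ·)} with hP
  have hPfin : P.Finite := by
    have hsub : P ⊆ (fun ri : ℕ × ℕ => jl.take ri.1 ++ [ri.2]) ''
        (Set.Iio jl.length ×ˢ Set.Iio (jl.foldr max 0 + 1)) := by
      rintro p ⟨r, i, hr, hi, rfl, -⟩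
      refine ⟨(r, i), ⟨hr, ?_⟩, rfl⟩
      have hle := list_le_foldr_max jl jl[r] (List.getElem_mem hr)
      exact Set.mem_Iio.2 (Nat.lt_succ_of_le (le_trans (le_of_lt hi) hle))
    exact Set.Finite.subset (Set.Finite.image _ ((Set.finite_Iio _).prod (Set.finite_Iio _))) hsub
  have hPU : ∀ p ∈ P, closure (ISet 𝓘 p) ⊆ U := by
    rintro p ⟨r, i, hr, hi, rfl, hchain⟩
    intro x hx
    have hlen : (jl.take r).length = r := by rw [List.length_take]; omega
    refine ⟨closure (ISet 𝓘 (jl.take r ++ [i])),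
      ⟨jl.take r ++ [i], ⟨by simp, hchain⟩, ?_, rfl⟩, hx⟩
    left
    refine ⟨r, i, jl[r], ?_, ?_, List.getElem?_eq_getElem hr, hi⟩
    · intro s hs
      rw [List.getElem?_append, hlen, if_pos hs, List.getElem?_take, if_pos hs]
    · have h := List.getElem?_concat_length (l := jl.take r) (a := i)
      rw [hlen] at h
      exact h
  set FinU := ⋃ p ∈ P, closure (ISet 𝓘 p) with hFinU
  have hFinUclosed : IsClosed FinU :=
    Set.Finite.isClosed_biUnion hPfin (fun p _ => isClosed_closure)
  have hFinU_sub_U : FinU ⊆ U := Set.iUnion₂_subset hPU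
  have hcase : ∀ a, SigmaMem a → SLt a jl →
      closure (ISet 𝓘 a) ⊆ FinU ∨
        (jl.Chain' (· < ·) ∧ closure (ISet 𝓘 a) ⊆ JSet 𝓘 jl) := by
    rintro a ⟨hane, hachain⟩ (⟨r, x, y, hag, hax, hjy, hxy⟩ | ⟨hpre, hne⟩)
    · left
      have hrlen : r < jl.length := by
        by_contra h
        rw [List.getElem?_eq_none (le_of_not_gt h)] at hjy
        exact Option.some_ne_none y hjy.symm
      have hralen : r < a.length := by
        by_contra h
        rw [List.getElem?_eq_none (le_of_not_gt h)] at hax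
        exact Option.some_ne_none x hax.symm
      have hy : jl[r] = y := by
        rw [List.getElem?_eq_getElem hrlen] at hjy
        exact Option.some_inj.1 hjy
      have hlen : (jl.take r).length = r := by rw [List.length_take]; omega
      have hpa : jl.take r ++ [x] = a.take (r + 1) := by
        apply List.ext_getElem?
        intro s
        rw [List.getElem?_take, List.getElem?_append, hlen]
        rcases lt_trichotomy s r with hs | rfl | hs
        · rw [if_pos hs, if_pos (by omega : s < r + 1), List.getElem?_take, if_pos hs,
            hag s hs]
        · rw [if_neg (lt_irrefl s), if_pos (by omega : s < s + 1), Nat.sub_self, hax]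
          rfl
        · rw [if_neg (by omega : ¬ s < r), if_neg (by omega : ¬ s < r + 1)]
          exact List.getElem?_eq_none (by simp; omega)
      have hppre : (jl.take r ++ [x]) <+: a := by
        rw [hpa]; exact List.take_prefix _ _
      have hchainp : (jl.take r ++ [x]).Chain' (· < ·) :=
        hachain.sublist hppre.sublist
      have hpP : jl.take r ++ [x] ∈ P := ⟨r, x, hrlen, hy ▸ hxy, rfl, hchainp⟩
      obtain ⟨c, hc⟩ := hppre
      have hsubcl : closure (ISet 𝓘 a) ⊆ closure (ISet 𝓘 (jl.take r ++ [x])) := by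
        rw [← hc]
        exact closure_ISet_append_subset 𝓘 hreg c (by simp)
      exact fun z hz => Set.mem_biUnion hpP (hsubcl hz)
    · obtain ⟨c, hc⟩ := hpre
      have hcne : c ≠ [] := by
        rintro rfl
        rw [List.append_nil] at hc
        exact hne hc
      have hjlchain : jl.Chain' (· < ·) := hachain.sublist (List.IsPrefix.sublist ⟨c, hc⟩)
      right
      refine ⟨hjlchain, ?_⟩
      rw [← hc]
      exact closure_ISet_append_subset_JSet 𝓘 hreg hjl hcne
  have hEU : jl.Chain' (· < ·) → JSet 𝓘 jl ⊆ U := by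
    intro hchain x hx
    rcases hcov x with ⟨i0, hxI⟩
    have hJtake : ∀ r, 1 ≤ r → r ≤ jl.length → x ∈ JSet 𝓘 (jl.take r) :=
      fun r h1 h2 => JSet_subset_JSet_take 𝓘 hreg hjl h1 h2 hx
    by_cases hmem : i0 ∈ jl
    · exfalso
      obtain ⟨r, hr, hjr⟩ := List.getElem_of_mem hmem
      have hx1 : x ∈ JSet 𝓘 (jl.take (r + 1)) := hJtake (r + 1) (by omega) (by omega)
      have htake : jl.take (r + 1) = jl.take r ++ [i0] := by
        rw [List.take_succ, List.getElem?_eq_getElem hr, hjr]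
        rfl
      have hx2 : x ∈ ISet 𝓘 (jl.take r ++ [i0]) := by
        refine mem_ISet_concat 𝓘 hxI _ ?_
        rcases Nat.eq_zero_or_pos r with h0 | h1
        · exact Or.inl (by simp [h0])
        · exact Or.inr (hJtake r h1 (by omega))
      rw [htake] at hx1
      exact hx1.2 hx2
    · set r := (jl.takeWhile (fun z => decide (z < i0))).length with hrdef
      have hrle : r ≤ jl.length := (jl.takeWhile_prefix _).sublist.length_le
      have htake_eq : jl.take r = jl.takeWhile (fun z => decide (z < i0)) :=
        (List.prefix_iff_eq_take.1 (jl.takeWhile_prefix _)).symm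
      have hall : ∀ z ∈ jl.take r, z < i0 := by
        intro z hz
        rw [htake_eq] at hz
        simpa using List.mem_takeWhile_imp hz
      rcases eq_or_lt_of_le hrle with heq | hlt
      · have htr : jl.take r = jl := by rw [heq, List.take_length]
        have hxa : x ∈ ISet 𝓘 (jl ++ [i0]) := by
          refine mem_ISet_concat 𝓘 hxI jl (Or.inr hx)
        have hchain' : (jl ++ [i0]).Chain' (· < ·) := by
          unfold List.Chain'
          rw [List.isChain_append]
          refine ⟨hchain, List.isChain_singleton _, ?_⟩
          intro z hz w hw
          simp only [List.head?_cons, Option.mem_def, Option.some_inj] at hw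
          subst hw
          refine hall z ?_
          rw [htr]
          exact List.mem_of_mem_getLast? hz
        exact ⟨closure (ISet 𝓘 (jl ++ [i0])),
          ⟨jl ++ [i0], ⟨by simp, hchain'⟩, Or.inr ⟨⟨[i0], rfl⟩, by simp⟩, rfl⟩,
          subset_closure hxa⟩
      · have hstop : ¬ (jl[r] < i0) := by
          have h := takeWhile_stop (fun z => decide (z < i0)) jl jl[r]
            (by rw [← hrdef]; exact List.getElem?_eq_getElem hlt)
          simpa using h
        have hne' : jl[r] ≠ i0 := fun h => hmem (h ▸ List.getElem_mem hlt)
        have hio : i0 < jl[r] := by omega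
        have hchainp : (jl.take r ++ [i0]).Chain' (· < ·) := by
          unfold List.Chain'
          rw [List.isChain_append]
          refine ⟨hchain.sublist (List.take_sublist _ _), List.isChain_singleton _, ?_⟩
          intro z hz w hw
          simp only [List.head?_cons, Option.mem_def, Option.some_inj] at hw
          subst hw
          exact hall z (List.mem_of_mem_getLast? hz)
        have hpP : jl.take r ++ [i0] ∈ P := ⟨r, i0, hlt, hio, rfl, hchainp⟩
        have hxp : x ∈ ISet 𝓘 (jl.take r ++ [i0]) := by
          refine mem_ISet_concat 𝓘 hxI _ ?_
          rcases Nat.eq_zero_or_pos r with h0 | h1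
          · exact Or.inl (by simp [h0])
          · exact Or.inr (hJtake r h1 hrle)
        exact hFinU_sub_U (Set.mem_biUnion hpP (subset_closure hxp))
  by_cases hchain : jl.Chain' (· < ·)
  · have hUeq : U = FinU ∪ JSet 𝓘 jl := by
      apply Set.Subset.antisymm
      · apply Set.sUnion_subset
        rintro S ⟨a, hSig, hlt, rfl⟩
        rcases hcase a hSig hlt with h | h
        · exact h.trans Set.subset_union_left
        · exact h.2.trans Set.subset_union_right
      · exact Set.union_subset hFinU_sub_U (hEU hchain)
    rw [hUeq]
    exact hFinUclosed.union (isClosed_JSet 𝓘 hreg hjl)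
  · have hUeq : U = FinU := by
      apply Set.Subset.antisymm
      · apply Set.sUnion_subset
        rintro S ⟨a, hSig, hlt, rfl⟩
        rcases hcase a hSig hlt with h | h
        · exact h
        · exact absurd h.1 hchain
      · exact hFinU_sub_U
    rw [hUeq]
    exact hFinUclosed

section Analysis
open Filter Topology

variable {K : Type*} [TopologicalSpace K] [CompactSpace K] [T2Space K]

lemma bddAbove_image_f {f : K → ℝ} (hf : Continuous f) (S : Set K) : BddAbove (f '' S) :=
  BddAbove.mono (Set.image_mono (f := f) (Set.subset_univ S))
    (isCompact_univ.bddAbove_image hf.continuousOn)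

lemma bddBelow_image_f {f : K → ℝ} (hf : Continuous f) (S : Set K) : BddBelow (f '' S) :=
  BddBelow.mono (Set.image_mono (f := f) (Set.subset_univ S))
    (isCompact_univ.bddBelow_image hf.continuousOn)

variable {f : K → ℝ} {Ls : ℕ → Set K}

lemma eventually_inter_empty (hLcl : ∀ s, IsClosed (Ls s))
    (hLdec : ∀ s t : ℕ, s ≤ t → Ls t ⊆ Ls s) {F : Set K} (hF : IsClosed F)
    (hemp : (⋂ s, Ls s) ∩ F = ∅) :
    ∀ᶠ s in atTop, Ls s ∩ F = ∅ := by
  have hex : ∃ s0, Ls s0 ∩ F = ∅ := by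
    by_contra h
    push_neg at h
    have hne := IsCompact.nonempty_iInter_of_sequence_nonempty_isCompact_isClosed
      (fun s => Ls s ∩ F)
      (fun s => Set.inter_subset_inter_left F (hLdec s (s+1) (by omega)))
      (fun s => h s)
      ((hLcl 0).inter hF).isCompact
      (fun s => (hLcl s).inter hF)
    rw [show (⋂ s, Ls s ∩ F) = (⋂ s, Ls s) ∩ F from (Set.iInter_inter F Ls).symm, hemp] at hne
    exact Set.not_nonempty_empty hne
  obtain ⟨s0, hs0⟩ := hex
  refine eventually_atTop.2 ⟨s0, fun s hs => ?_⟩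
  exact Set.eq_empty_of_subset_empty (hs0 ▸ Set.inter_subset_inter_left F (hLdec s0 s hs))

lemma tendsto_sSup_inter (hf : Continuous f) (hLcl : ∀ s, IsClosed (Ls s))
    (hLdec : ∀ s t : ℕ, s ≤ t → Ls t ⊆ Ls s) {F : Set K} (hF : IsClosed F)
    (hne : ((⋂ s, Ls s) ∩ F).Nonempty) :
    Tendsto (fun s => sSup (f '' (Ls s ∩ F))) atTop
      (𝓝 (sSup (f '' ((⋂ s, Ls s) ∩ F)))) := by
  set L := ⋂ s, Ls s with hLdef
  set c := sSup (f '' (L ∩ F)) with hc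
  have hsub : ∀ s, L ∩ F ⊆ Ls s ∩ F :=
    fun s => Set.inter_subset_inter_left F (Set.iInter_subset Ls s)
  have hlow : ∀ s, c ≤ sSup (f '' (Ls s ∩ F)) := fun s =>
    csSup_le_csSup (bddAbove_image_f hf _) (hne.image f) (Set.image_mono (f := f) (hsub s))
  rw [tendsto_order]
  constructor
  · intro a ha
    exact Eventually.of_forall fun s => lt_of_lt_of_le ha (hlow s)
  · intro b hb
    set b' := (c + b) / 2 with hb'
    have hcb' : c < b' := by rw [hb']; linarith
    have hb'b : b' < b := by rw [hb']; linarith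
    set D : ℕ → Set K := fun s => Ls s ∩ F ∩ f ⁻¹' (Set.Ici b') with hD
    have hDclosed : ∀ s, IsClosed (D s) :=
      fun s => ((hLcl s).inter hF).inter (isClosed_Ici.preimage hf)
    have hDdec : ∀ s, D (s + 1) ⊆ D s := fun s =>
      Set.inter_subset_inter_left _ (Set.inter_subset_inter_left F (hLdec s (s+1) (by omega)))
    have hex : ∃ s0, D s0 = ∅ := by
      by_contra h
      push_neg at h
      have hne2 := IsCompact.nonempty_iInter_of_sequence_nonempty_isCompact_isClosed
        D hDdec (fun s => h s) (hDclosed 0).isCompact hDclosed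
      obtain ⟨x, hx⟩ := hne2
      have hx1 : x ∈ L ∩ F := ⟨Set.mem_iInter.2 fun s => ((Set.mem_iInter.1 hx s).1).1,
        ((Set.mem_iInter.1 hx 0).1).2⟩
      have hfx : f x ≤ c := le_csSup (bddAbove_image_f hf _) (Set.mem_image_of_mem f hx1)
      have hfx2 : b' ≤ f x := (Set.mem_iInter.1 hx 0).2
      linarith
    obtain ⟨s0, hs0⟩ := hex
    refine eventually_atTop.2 ⟨s0, fun s hs => ?_⟩
    have hDs : D s = ∅ := Set.eq_empty_of_subset_empty (hs0 ▸
      Set.inter_subset_inter_left _ (Set.inter_subset_inter_left F (hLdec s0 s hs)))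
    have hle : sSup (f '' (Ls s ∩ F)) ≤ b' := by
      apply csSup_le ((hne.mono (hsub s)).image f)
      rintro y ⟨x, hx, rfl⟩
      by_contra hy
      push_neg at hy
      have : x ∈ D s := ⟨hx, le_of_lt hy⟩
      rw [hDs] at this
      exact this
    exact lt_of_le_of_lt hle hb'b

lemma tendsto_sInf_inter (hf : Continuous f) (hLcl : ∀ s, IsClosed (Ls s))
    (hLdec : ∀ s t : ℕ, s ≤ t → Ls t ⊆ Ls s) {F : Set K} (hF : IsClosed F)
    (hne : ((⋂ s, Ls s) ∩ F).Nonempty) :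
    Tendsto (fun s => sInf (f '' (Ls s ∩ F))) atTop
      (𝓝 (sInf (f '' ((⋂ s, Ls s) ∩ F)))) := by
  set L := ⋂ s, Ls s with hLdef
  set c := sInf (f '' (L ∩ F)) with hc
  have hsub : ∀ s, L ∩ F ⊆ Ls s ∩ F :=
    fun s => Set.inter_subset_inter_left F (Set.iInter_subset Ls s)
  have hhigh : ∀ s, sInf (f '' (Ls s ∩ F)) ≤ c := fun s =>
    csInf_le_csInf (bddBelow_image_f hf _) (hne.image f) (Set.image_mono (f := f) (hsub s))
  rw [tendsto_order]
  constructor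
  · intro a ha
    set b' := (a + c) / 2 with hb'
    have hab' : a < b' := by rw [hb']; linarith
    have hb'c : b' < c := by rw [hb']; linarith
    set D : ℕ → Set K := fun s => Ls s ∩ F ∩ f ⁻¹' (Set.Iic b') with hD
    have hDclosed : ∀ s, IsClosed (D s) :=
      fun s => ((hLcl s).inter hF).inter (isClosed_Iic.preimage hf)
    have hDdec : ∀ s, D (s + 1) ⊆ D s := fun s =>
      Set.inter_subset_inter_left _ (Set.inter_subset_inter_left F (hLdec s (s+1) (by omega)))
    have hex : ∃ s0, D s0 = ∅ := by
      by_contra h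
      push_neg at h
      have hne2 := IsCompact.nonempty_iInter_of_sequence_nonempty_isCompact_isClosed
        D hDdec (fun s => h s) (hDclosed 0).isCompact hDclosed
      obtain ⟨x, hx⟩ := hne2
      have hx1 : x ∈ L ∩ F := ⟨Set.mem_iInter.2 fun s => ((Set.mem_iInter.1 hx s).1).1,
        ((Set.mem_iInter.1 hx 0).1).2⟩
      have hfx : c ≤ f x := csInf_le (bddBelow_image_f hf _) (Set.mem_image_of_mem f hx1)
      have hfx2 : f x ≤ b' := (Set.mem_iInter.1 hx 0).2
      linarith
    obtain ⟨s0, hs0⟩ := hex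
    refine eventually_atTop.2 ⟨s0, fun s hs => ?_⟩
    have hDs : D s = ∅ := Set.eq_empty_of_subset_empty (hs0 ▸
      Set.inter_subset_inter_left _ (Set.inter_subset_inter_left F (hLdec s0 s hs)))
    have hle : b' ≤ sInf (f '' (Ls s ∩ F)) := by
      apply le_csInf ((hne.mono (hsub s)).image f)
      rintro y ⟨x, hx, rfl⟩
      by_contra hy
      push_neg at hy
      have : x ∈ D s := ⟨hx, le_of_lt hy⟩
      rw [hDs] at this
      exact this
    exact lt_of_lt_of_le hab' hle
  · intro b hb
    exact Eventually.of_forall fun s => lt_of_le_of_lt (hhigh s) hb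

lemma tendsto_csSup_finite {T : Type*} {A : Set T} (hfin : A.Finite) (hne : A.Nonempty)
    {u : ℕ → T → ℝ} {v : T → ℝ} (h : ∀ t ∈ A, Tendsto (fun s => u s t) atTop (𝓝 (v t))) :
    Tendsto (fun s => sSup ((u s) '' A)) atTop (𝓝 (sSup (v '' A))) := by
  rw [Metric.tendsto_atTop]
  intro ε hε
  have hev : ∀ᶠ s in atTop, ∀ t ∈ A, dist (u s t) (v t) < ε / 2 := by
    rw [Filter.eventually_all_finite hfin]
    intro t ht
    have := (h t ht).eventually (Metric.ball_mem_nhds (v t) (by linarith : (0:ℝ) < ε/2))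
    exact this.mono fun s hs => Metric.mem_ball.1 hs
  obtain ⟨N, hN⟩ := eventually_atTop.1 hev
  refine ⟨N, fun s hs => ?_⟩
  have hs' := hN s hs
  have h1 : sSup (u s '' A) ≤ sSup (v '' A) + ε / 2 := by
    apply csSup_le (hne.image _)
    rintro y ⟨t, ht, rfl⟩
    have h2 : v t ≤ sSup (v '' A) := le_csSup (hfin.image v).bddAbove (Set.mem_image_of_mem v ht)
    have h3 : |u s t - v t| < ε / 2 := by rw [← Real.dist_eq]; exact hs' t ht
    have := abs_lt.1 h3
    linarith [this.2]
  have h2 : sSup (v '' A) ≤ sSup (u s '' A) + ε / 2 := by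
    apply csSup_le (hne.image _)
    rintro y ⟨t, ht, rfl⟩
    have h2' : u s t ≤ sSup (u s '' A) :=
      le_csSup (hfin.image (u s)).bddAbove (Set.mem_image_of_mem (u s) ht)
    have h3 : |u s t - v t| < ε / 2 := by rw [← Real.dist_eq]; exact hs' t ht
    have := abs_lt.1 h3
    linarith [this.1]
  rw [Real.dist_eq, abs_lt]
  constructor <;> linarith

lemma tendsto_csInf_finite {T : Type*} {A : Set T} (hfin : A.Finite) (hne : A.Nonempty)
    {u : ℕ → T → ℝ} {v : T → ℝ} (h : ∀ t ∈ A, Tendsto (fun s => u s t) atTop (𝓝 (v t))) :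
    Tendsto (fun s => sInf ((u s) '' A)) atTop (𝓝 (sInf (v '' A))) := by
  rw [Metric.tendsto_atTop]
  intro ε hε
  have hev : ∀ᶠ s in atTop, ∀ t ∈ A, dist (u s t) (v t) < ε / 2 := by
    rw [Filter.eventually_all_finite hfin]
    intro t ht
    have := (h t ht).eventually (Metric.ball_mem_nhds (v t) (by linarith : (0:ℝ) < ε/2))
    exact this.mono fun s hs => Metric.mem_ball.1 hs
  obtain ⟨N, hN⟩ := eventually_atTop.1 hev
  refine ⟨N, fun s hs => ?_⟩
  have hs' := hN s hs
  have h1 : sInf (v '' A) - ε / 2 ≤ sInf (u s '' A) := by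
    apply le_csInf (hne.image _)
    rintro y ⟨t, ht, rfl⟩
    have h2 : sInf (v '' A) ≤ v t := csInf_le (hfin.image v).bddBelow (Set.mem_image_of_mem v ht)
    have h3 : |u s t - v t| < ε / 2 := by rw [← Real.dist_eq]; exact hs' t ht
    have := abs_lt.1 h3
    linarith [this.1]
  have h2 : sInf (u s '' A) - ε / 2 ≤ sInf (v '' A) := by
    apply le_csInf (hne.image _)
    rintro y ⟨t, ht, rfl⟩
    have h2' : sInf (u s '' A) ≤ u s t :=
      csInf_le (hfin.image (u s)).bddBelow (Set.mem_image_of_mem (u s) ht)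
    have h3 : |u s t - v t| < ε / 2 := by rw [← Real.dist_eq]; exact hs' t ht
    have := abs_lt.1 h3
    linarith [this.2]
  rw [Real.dist_eq, abs_lt]
  constructor <;> linarith

lemma EReal_sSup_image (hf : Continuous f) {S : Set K} (hne : S.Nonempty) :
    sSup ((fun t => (f t : EReal)) '' S) = ((sSup (f '' S) : ℝ) : EReal) := by
  have himg : (fun t => (f t : EReal)) '' S = Real.toEReal '' (f '' S) := by
    rw [← Set.image_comp]; rfl
  rw [himg]
  exact (Monotone.map_csSup_of_continuousAt (continuous_coe_real_ereal.continuousAt)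
    EReal.coe_strictMono.monotone (hne.image f) (bddAbove_image_f hf S)).symm

lemma EReal_sInf_image (hf : Continuous f) {S : Set K} (hne : S.Nonempty) :
    sInf ((fun t => (f t : EReal)) '' S) = ((sInf (f '' S) : ℝ) : EReal) := by
  have himg : (fun t => (f t : EReal)) '' S = Real.toEReal '' (f '' S) := by
    rw [← Set.image_comp]; rfl
  rw [himg]
  exact (Monotone.map_csInf_of_continuousAt (continuous_coe_real_ereal.continuousAt)
    EReal.coe_strictMono.monotone (hne.image f) (bddBelow_image_f hf S)).symm

end Analysis

open Filter in
/-- Lemma 5.2: if `L₁ ⊇ L₂ ⊇ ⋯` is a decreasing sequence of nonempty closed subsets of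
the compact space `K` with intersection `L`, and `(𝓜,𝓝)` is a good choice of type
`(m,n,i,j)` on `L`, then `(𝓜,𝓝)` is a good choice of the same type on `L_s` for
arbitrarily large `s`. -/
theorem lemma_5_2 {K : Type*} [TopologicalSpace K] [CompactSpace K] [T2Space K]
    (𝓘 : ℕ → Set (Set K))
    (hreg : ∀ i : ℕ, IsRegularIsolatedFamily (𝓘 i))
    (hcover : ⋃₀ (⋃ i : ℕ, 𝓘 i) = Set.univ)
    (f : K → ℝ) (hf : Continuous f)
    (Ls : ℕ → Set K) (hLne : ∀ s, (Ls s).Nonempty) (hLcl : ∀ s, IsClosed (Ls s))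
    (hLdec : ∀ s t : ℕ, s ≤ t → Ls t ⊆ Ls s)
    (L : Set K) (hL : L = ⋂ s : ℕ, Ls s)
    (m n : ℕ) (il jl : List ℕ) (𝓜 𝓝 : Set (Set K))
    (hB : InB 𝓘 L m n il jl 𝓜 𝓝)
    (hgood : GoodChoice 𝓘 f L m n il jl 𝓜 𝓝) :
    ∀ s₀ : ℕ, ∃ s : ℕ, s₀ ≤ s ∧ InB 𝓘 (Ls s) m n il jl 𝓜 𝓝 ∧
      GoodChoice 𝓘 f (Ls s) m n il jl 𝓜 𝓝 := by
  intro s₀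
  have hsubL : ∀ s, L ⊆ Ls s := fun s => hL ▸ Set.iInter_subset Ls s
  have hLne' : L.Nonempty := by
    rw [hL]
    exact IsCompact.nonempty_iInter_of_sequence_nonempty_isCompact_isClosed Ls
      (fun s => hLdec s (s+1) (by omega)) hLne (hLcl 0).isCompact hLcl
  obtain ⟨hM, hN, hMfin, hNfin, hMcard, hNcard, hMint, hNint, hdisj⟩ := hB
  have hInB : ∀ s, InB 𝓘 (Ls s) m n il jl 𝓜 𝓝 := fun s =>
    ⟨hM, hN, hMfin, hNfin, hMcard, hNcard,
      fun M hMm => (hMint M hMm).mono (Set.inter_subset_inter Set.Subset.rfl (hsubL s)),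
      fun N hNn => (hNint N hNn).mono (Set.inter_subset_inter Set.Subset.rfl (hsubL s)),
      hdisj⟩
  set F1 := (Gset 𝓘 jl 𝓝)ᶜ with hF1
  set F2 := (Gset 𝓘 il 𝓜)ᶜ with hF2
  have hF1closed : IsClosed F1 := by
    have h : F1 = (⋃₀ {S | ∃ a : List ℕ, SigmaMem a ∧ SLt a jl ∧ S = closure (ISet 𝓘 a)} ∪
        closure (⋃₀ (fam 𝓘 jl \ 𝓝))) := compl_compl _
    rw [h]
    exact (isClosed_predUnion 𝓘 hreg hcover jl).union isClosed_closure
  have hF2closed : IsClosed F2 := by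
    have h : F2 = (⋃₀ {S | ∃ a : List ℕ, SigmaMem a ∧ SLt a il ∧ S = closure (ISet 𝓘 a)} ∪
        closure (⋃₀ (fam 𝓘 il \ 𝓜))) := compl_compl _
    rw [h]
    exact (isClosed_predUnion 𝓘 hreg hcover il).union isClosed_closure
  -- convergence of basic quantities
  have hLL : L = ⋂ s, Ls s := hL
  have htB : Tendsto (fun s => sSup (f '' Ls s)) atTop (nhds (sSup (f '' L))) := by
    have h := tendsto_sSup_inter (Ls := Ls) hf hLcl hLdec isClosed_univ
      (F := Set.univ) (by rw [Set.inter_univ, ← hLL]; exact hLne')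
    simp only [Set.inter_univ, ← hLL] at h
    exact h
  have htA : Tendsto (fun s => sInf (f '' Ls s)) atTop (nhds (sInf (f '' L))) := by
    have h := tendsto_sInf_inter (Ls := Ls) hf hLcl hLdec isClosed_univ
      (F := Set.univ) (by rw [Set.inter_univ, ← hLL]; exact hLne')
    simp only [Set.inter_univ, ← hLL] at h
    exact h
  -- gcBound convergence
  have hsetN : ∀ (X : Set K), {x | ∃ N ∈ 𝓝, x = sSup (f '' (X ∩ closure N))}
      = (fun N => sSup (f '' (X ∩ closure N))) '' 𝓝 := by
    intro X; ext x; simp [eq_comm]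
  have hsetM : ∀ (X : Set K), {x | ∃ M ∈ 𝓜, x = sInf (f '' (X ∩ closure M))}
      = (fun M => sInf (f '' (X ∩ closure M))) '' 𝓜 := by
    intro X; ext x; simp [eq_comm]
  have htbN : Tendsto (fun s => sInf ((fun N => sSup (f '' (Ls s ∩ closure N))) '' 𝓝)) atTop
      (nhds (sInf ((fun N => sSup (f '' (L ∩ closure N))) '' 𝓝))) := by
    rcases Set.eq_empty_or_nonempty 𝓝 with rfl | hNne
    · simp only [Set.image_empty]
      exact tendsto_const_nhds
    · refine tendsto_csInf_finite hNfin hNne (fun N hNn => ?_)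
      have hne : (L ∩ closure N).Nonempty :=
        ((hNint N hNn).mono (fun x hx => ⟨hx.2, subset_closure hx.1⟩))
      have h := tendsto_sSup_inter (Ls := Ls) hf hLcl hLdec (isClosed_closure (s := N))
        (by rw [← hLL]; exact hne)
      rw [← hLL] at h
      exact h
  have htaM : Tendsto (fun s => sSup ((fun M => sInf (f '' (Ls s ∩ closure M))) '' 𝓜)) atTop
      (nhds (sSup ((fun M => sInf (f '' (L ∩ closure M))) '' 𝓜))) := by
    rcases Set.eq_empty_or_nonempty 𝓜 with rfl | hMne
    · simp only [Set.image_empty]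
      exact tendsto_const_nhds
    · refine tendsto_csSup_finite hMfin hMne (fun M hMm => ?_)
      have hne : (L ∩ closure M).Nonempty :=
        ((hMint M hMm).mono (fun x hx => ⟨hx.2, subset_closure hx.1⟩))
      have h := tendsto_sInf_inter (Ls := Ls) hf hLcl hLdec (isClosed_closure (s := M))
        (by rw [← hLL]; exact hne)
      rw [← hLL] at h
      exact h
  have hbnd : Tendsto (fun s => gcBound f (Ls s) 𝓜 𝓝) atTop (nhds (gcBound f L 𝓜 𝓝)) := by
    have heq : (fun s => gcBound f (Ls s) 𝓜 𝓝) = fun s =>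
        (sSup (f '' Ls s) - sInf ((fun N => sSup (f '' (Ls s ∩ closure N))) '' 𝓝))
          + (sSup ((fun M => sInf (f '' (Ls s ∩ closure M))) '' 𝓜) - sInf (f '' Ls s)) := by
      funext s
      rw [gcBound, hsetN, hsetM]
    rw [heq, gcBound, hsetN, hsetM]
    exact (htB.sub htbN).add (htaM.sub htA)
  -- first (n-side) eventual inequality
  have hev1 : ∀ᶠ s in atTop, ((gcBound f (Ls s) 𝓜 𝓝 : ℝ) : EReal)
      < ((n : ℝ) : EReal)⁻¹ * (((sSup (f '' Ls s) : ℝ) : EReal) - gcBeta 𝓘 f (Ls s) jl 𝓝) := by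
    rcases Nat.eq_zero_or_pos n with rfl | hn
    · have hlt : gcBound f L 𝓜 𝓝 < 0 := by
        have h := hgood.1
        rw [Nat.cast_zero, EReal.coe_zero, EReal.inv_zero, EReal.zero_mul,
          ← EReal.coe_zero, EReal.coe_lt_coe_iff] at h
        exact h
      have hev := hbnd.eventually_lt tendsto_const_nhds hlt
      refine hev.mono fun s hs => ?_
      rw [Nat.cast_zero, EReal.coe_zero, EReal.inv_zero, EReal.zero_mul,
        ← EReal.coe_zero, EReal.coe_lt_coe_iff]
      exact hs
    · by_cases hne1 : (L ∩ F1).Nonempty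
      · have hβ : Tendsto (fun s => sSup (f '' (Ls s ∩ F1))) atTop
            (nhds (sSup (f '' (L ∩ F1)))) := by
          have h := tendsto_sSup_inter (Ls := Ls) hf hLcl hLdec hF1closed
            (by rw [← hLL]; exact hne1)
          rw [← hLL] at h
          exact h
        have hgood1 : gcBound f L 𝓜 𝓝 < (n:ℝ)⁻¹ * (sSup (f '' L) - sSup (f '' (L ∩ F1))) := by
          have h := hgood.1
          rw [gcBeta, Set.diff_eq, ← hF1, EReal_sSup_image hf hne1, ← EReal.coe_sub,
            ← EReal.coe_inv, ← EReal.coe_mul, EReal.coe_lt_coe_iff] at h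
          exact h
        have hseq : Tendsto (fun s => (n:ℝ)⁻¹ * (sSup (f '' Ls s) - sSup (f '' (Ls s ∩ F1))))
            atTop (nhds ((n:ℝ)⁻¹ * (sSup (f '' L) - sSup (f '' (L ∩ F1))))) :=
          ((htB.sub hβ).const_mul _)
        have hev := hbnd.eventually_lt hseq hgood1
        refine hev.mono fun s hs => ?_
        have hne1s : (Ls s ∩ F1).Nonempty :=
          hne1.mono (Set.inter_subset_inter (hsubL s) Set.Subset.rfl)
        rw [gcBeta, Set.diff_eq, ← hF1, EReal_sSup_image hf hne1s, ← EReal.coe_sub,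
          ← EReal.coe_inv, ← EReal.coe_mul, EReal.coe_lt_coe_iff]
        exact hs
      · have hemp : L ∩ F1 = ∅ := Set.not_nonempty_iff_eq_empty.1 hne1
        have hev0 := eventually_inter_empty (Ls := Ls) hLcl hLdec hF1closed
          (by rw [← hLL]; exact hemp)
        refine hev0.mono fun s hs => ?_
        have hβs : gcBeta 𝓘 f (Ls s) jl 𝓝 = ⊥ := by
          rw [gcBeta, Set.diff_eq, ← hF1, hs, Set.image_empty, sSup_empty]
        have hpos : (0 : EReal) < ((n : ℝ) : EReal)⁻¹ := by
          rw [← EReal.coe_inv]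
          exact EReal.coe_pos.2 (by positivity)
        rw [hβs, EReal.coe_sub_bot, EReal.mul_top_of_pos hpos]
        exact EReal.coe_lt_top _
  -- second (m-side) eventual inequality
  have hev2 : ∀ᶠ s in atTop, ((gcBound f (Ls s) 𝓜 𝓝 : ℝ) : EReal)
      < ((m : ℝ) : EReal)⁻¹ * (gcAlpha 𝓘 f (Ls s) il 𝓜 - ((sInf (f '' Ls s) : ℝ) : EReal)) := by
    rcases Nat.eq_zero_or_pos m with rfl | hm
    · have hlt : gcBound f L 𝓜 𝓝 < 0 := by
        have h := hgood.2
        rw [Nat.cast_zero, EReal.coe_zero, EReal.inv_zero, EReal.zero_mul,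
          ← EReal.coe_zero, EReal.coe_lt_coe_iff] at h
        exact h
      have hev := hbnd.eventually_lt tendsto_const_nhds hlt
      refine hev.mono fun s hs => ?_
      rw [Nat.cast_zero, EReal.coe_zero, EReal.inv_zero, EReal.zero_mul,
        ← EReal.coe_zero, EReal.coe_lt_coe_iff]
      exact hs
    · by_cases hne2 : (L ∩ F2).Nonempty
      · have hα : Tendsto (fun s => sInf (f '' (Ls s ∩ F2))) atTop
            (nhds (sInf (f '' (L ∩ F2)))) := by
          have h := tendsto_sInf_inter (Ls := Ls) hf hLcl hLdec hF2closed
            (by rw [← hLL]; exact hne2)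
          rw [← hLL] at h
          exact h
        have hgood2 : gcBound f L 𝓜 𝓝 < (m:ℝ)⁻¹ * (sInf (f '' (L ∩ F2)) - sInf (f '' L)) := by
          have h := hgood.2
          rw [gcAlpha, Set.diff_eq, ← hF2, EReal_sInf_image hf hne2, ← EReal.coe_sub,
            ← EReal.coe_inv, ← EReal.coe_mul, EReal.coe_lt_coe_iff] at h
          exact h
        have hseq : Tendsto (fun s => (m:ℝ)⁻¹ * (sInf (f '' (Ls s ∩ F2)) - sInf (f '' Ls s)))
            atTop (nhds ((m:ℝ)⁻¹ * (sInf (f '' (L ∩ F2)) - sInf (f '' L)))) :=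
          ((hα.sub htA).const_mul _)
        have hev := hbnd.eventually_lt hseq hgood2
        refine hev.mono fun s hs => ?_
        have hne2s : (Ls s ∩ F2).Nonempty :=
          hne2.mono (Set.inter_subset_inter (hsubL s) Set.Subset.rfl)
        rw [gcAlpha, Set.diff_eq, ← hF2, EReal_sInf_image hf hne2s, ← EReal.coe_sub,
          ← EReal.coe_inv, ← EReal.coe_mul, EReal.coe_lt_coe_iff]
        exact hs
      · have hemp : L ∩ F2 = ∅ := Set.not_nonempty_iff_eq_empty.1 hne2
        have hev0 := eventually_inter_empty (Ls := Ls) hLcl hLdec hF2closed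
          (by rw [← hLL]; exact hemp)
        refine hev0.mono fun s hs => ?_
        have hαs : gcAlpha 𝓘 f (Ls s) il 𝓜 = ⊤ := by
          rw [gcAlpha, Set.diff_eq, ← hF2, hs, Set.image_empty, sInf_empty]
        have hpos : (0 : EReal) < ((m : ℝ) : EReal)⁻¹ := by
          rw [← EReal.coe_inv]
          exact EReal.coe_pos.2 (by positivity)
        rw [hαs, EReal.top_sub_coe, EReal.mul_top_of_pos hpos]
        exact EReal.coe_lt_top _
  obtain ⟨s, hs12, hs0⟩ := ((hev1.and hev2).and (eventually_ge_atTop s₀)).exists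
  exact ⟨s, hs0, hInB s, hs12.1, hs12.2⟩
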